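/- (Generalised Graded Uniqueness Theorem) Let G be an ample Hausdorff groupoid, R a unital commutative ring, Γ a discrete group with identity ε, and (Σ, G, Γ) a Γ-graded discrete R-twist such that {u ∈ Σ_ε⁽⁰⁾ : (Σ_ε)ᵤᵘ ⊆ Iso(Σ_ε)°} is dense in Σ⁽⁰⁾. If Q is a Γ-graded ring and π : A_R(G; Σ) → Q is a graded ring homomorphism, then π is injective if and only if π(ι_ε(ι(f))) ≠ 0 for every nonzero f ∈ A_R(Iso(G_ε)°; Iso(Σ_ε)°), where ι : A_R(Iso(G_ε)°; Iso(Σ_ε)°) → A_R(G_ε; Σ_ε) and ι_ε : A_R(G_ε; Σ_ε) → A_R(G; Σ) are the natural inclusions. -/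

import Mathlib

open Set Function TopologicalSpace Classical
noncomputable section

universe u v w

/-- An étale topological groupoid, encoded with total operations:
`mul a b` is only meaningful when `src a = rng b`. -/
structure EtaleGroupoid (G : Type u) [TopologicalSpace G] where
  mul : G → G → G
  inv : G → G
  src : G → G
  rng : G → G
  rng_mul_self : ∀ g, mul (rng g) g = g
  mul_src_self : ∀ g, mul g (src g) = g
  src_inv : ∀ g, src (inv g) = rng g
  rng_inv : ∀ g, rng (inv g) = src g
  inv_inv : ∀ g, inv (inv g) = g
  inv_mul_self : ∀ g, mul (inv g) g = src g
  mul_inv_self : ∀ g, mul g (inv g) = rng g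
  mul_assoc' : ∀ a b c, src a = rng b → src b = rng c →
    mul (mul a b) c = mul a (mul b c)
  src_mul : ∀ a b, src a = rng b → src (mul a b) = src b
  rng_mul : ∀ a b, src a = rng b → rng (mul a b) = rng a
  continuous_inv : Continuous inv
  continuousOn_mul :
    ContinuousOn (fun p : G × G => mul p.1 p.2) {p : G × G | src p.1 = rng p.2}
  isLocalHomeomorph_src : IsLocalHomeomorph src

namespace EtaleGroupoid

variable {G : Type u} [TopologicalSpace G] (𝒢 : EtaleGroupoid G)

/-- The unit space `G⁽⁰⁾`. -/
def unitSpace : Set G := Set.range 𝒢.src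

/-- The isotropy bundle `Iso(G) = {γ : r γ = s γ}`. -/
def iso : Set G := {g | 𝒢.rng g = 𝒢.src g}

/-- The isotropy group `Gᵤᵘ` at a unit `u`. -/
def isoAt (u : G) : Set G := {g | 𝒢.rng g = u ∧ 𝒢.src g = u}

/-- `U` is a bisection: `src` and `rng` are injective on `U`. -/
def IsBisection (U : Set G) : Prop := Set.InjOn 𝒢.src U ∧ Set.InjOn 𝒢.rng U

/-- `U` is a compact open bisection. -/
def IsCOB (U : Set G) : Prop := IsCompact U ∧ IsOpen U ∧ 𝒢.IsBisection U

/-- Pointwise inverse of a set. -/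
def setInv (U : Set G) : Set G := 𝒢.inv '' U

/-- Pointwise product of two sets (only composable products). -/
def setMul (U V : Set G) : Set G :=
  {g | ∃ a ∈ U, ∃ b ∈ V, 𝒢.src a = 𝒢.rng b ∧ g = 𝒢.mul a b}

/-- `H` is a subgroupoid of `G`. -/
def IsSubgroupoid (H : Set G) : Prop :=
  (∀ a ∈ H, 𝒢.inv a ∈ H) ∧
  (∀ a ∈ H, ∀ b ∈ H, 𝒢.src a = 𝒢.rng b → 𝒢.mul a b ∈ H) ∧
  (∀ a ∈ H, 𝒢.src a ∈ H)

/-- The groupoid is effective: the interior of the isotropy is the unit space. -/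
def Effective : Prop := interior 𝒢.iso = 𝒢.unitSpace

/-- A continuous (i.e. locally constant) `Rˣ`-valued 2-cocycle on `G`. -/
def IsCocycle {R : Type w} [CommRing R] (c : G → G → Rˣ) : Prop :=
  IsLocallyConstant (fun p : {p : G × G // 𝒢.src p.1 = 𝒢.rng p.2} => c p.1.1 p.1.2) ∧
  (∀ a b d, 𝒢.src a = 𝒢.rng b → 𝒢.src b = 𝒢.rng d →
    c a b * c (𝒢.mul a b) d = c b d * c a (𝒢.mul b d)) ∧
  (∀ g, c (𝒢.rng g) g = 1 ∧ c g (𝒢.src g) = 1)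

/-- Membership in the (cocycle-twisted) Steinberg algebra `A_R(G)`:
locally constant, compactly supported functions `G → R`. -/
def MemSt {R : Type w} [CommRing R] (f : G → R) : Prop :=
  IsLocallyConstant f ∧ ∃ K : Set G, IsCompact K ∧ Function.support f ⊆ K

/-- Convolution on `A_R(G;σ)` twisted by a 2-cocycle `c`. -/
noncomputable def convC {R : Type w} [CommRing R] (c : G → G → Rˣ) (f g : G → R) :
    G → R := fun γ =>
  ∑ᶠ p : G × G,
    if 𝒢.src p.1 = 𝒢.rng p.2 ∧ 𝒢.mul p.1 p.2 = γ then
      (c p.1 p.2 : R) * f p.1 * g p.2 else 0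

/-- A continuous `Γ`-grading on `G` (for a discrete group `Γ`). -/
def IsGrading {Γ : Type*} [Group Γ] (c : G → Γ) : Prop :=
  IsLocallyConstant c ∧ ∀ a b, 𝒢.src a = 𝒢.rng b → c (𝒢.mul a b) = c a * c b

end EtaleGroupoid

/-- An ample groupoid: étale with a basis of compact open bisections. -/
structure AmpleGroupoid (G : Type u) [TopologicalSpace G] extends EtaleGroupoid G where
  ample : TopologicalSpace.IsTopologicalBasis {U : Set G | toEtaleGroupoid.IsCOB U}

/-- A discrete twist `G⁽⁰⁾ × Rˣ → Σ → G` over an ample groupoid `G`. -/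
structure DiscreteTwist (R : Type w) [CommRing R] {G : Type u} {S : Type v}
    [TopologicalSpace G] [TopologicalSpace S]
    (𝒢 : AmpleGroupoid G) (𝒮 : EtaleGroupoid S) where
  i : G → Rˣ → S
  q : S → G
  continuousOn_i : ∀ t : Rˣ, ContinuousOn (fun x => i x t) 𝒢.unitSpace
  continuous_q : Continuous q
  i_injOn : Set.InjOn (fun p : G × Rˣ => i p.1 p.2) (𝒢.unitSpace ×ˢ (Set.univ : Set Rˣ))
  q_surj : Function.Surjective q
  exact' : ∀ x ∈ 𝒢.unitSpace, q ⁻¹' {x} = {σ | ∃ t : Rˣ, σ = i x t}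
  i_mul : ∀ x ∈ 𝒢.unitSpace, ∀ s t : Rˣ, 𝒮.mul (i x s) (i x t) = i x (s * t)
  unit_eq : 𝒮.unitSpace = (fun x => i x 1) '' 𝒢.unitSpace
  q_mul : ∀ a b, 𝒮.src a = 𝒮.rng b → q (𝒮.mul a b) = 𝒢.mul (q a) (q b)
  q_inv : ∀ a, q (𝒮.inv a) = 𝒢.inv (q a)
  q_src : ∀ a, q (𝒮.src a) = 𝒢.src (q a)
  q_rng : ∀ a, q (𝒮.rng a) = 𝒢.rng (q a)
  q_unit_bij : Set.BijOn q 𝒮.unitSpace 𝒢.unitSpace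
  central : ∀ (σ : S) (t : Rˣ),
    𝒮.mul (i (𝒢.rng (q σ)) t) σ = 𝒮.mul σ (i (𝒢.src (q σ)) t)
  loc_triv : ∀ α : G, ∃ B : Set G, IsOpen B ∧ α ∈ B ∧ 𝒢.IsBisection B ∧
    ∃ P : G → S, ContinuousOn P B ∧ (∀ β ∈ B, q (P β) = β) ∧
      (∀ t : Rˣ, ContinuousOn (fun β => 𝒮.mul (i (𝒢.rng β) t) (P β)) B) ∧
      (∀ σ : S, q σ ∈ B →
        ∃! p : G × Rˣ, p.1 ∈ B ∧ 𝒮.mul (i (𝒢.rng p.1) p.2) (P p.1) = σ) ∧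
      (∀ t : Rˣ, ∀ V ⊆ B, IsOpen V →
        IsOpen ((fun β => 𝒮.mul (i (𝒢.rng β) t) (P β)) '' V))

namespace DiscreteTwist

variable {R : Type w} [CommRing R] {G : Type u} {S : Type v}
  [TopologicalSpace G] [TopologicalSpace S]
  {𝒢 : AmpleGroupoid G} {𝒮 : EtaleGroupoid S} (T : DiscreteTwist R 𝒢 𝒮)

/-- The action of `Rˣ` on `Σ`: `t • σ = i(r σ, t) σ`. -/
def act (t : Rˣ) (σ : S) : S := 𝒮.mul (T.i (𝒢.rng (T.q σ)) t) σ

/-- The function `1̃_X` associated to a subset `X ⊆ Σ`. -/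
noncomputable def tilde (X : Set S) : S → R := fun σ =>
  if h : ∃ t : Rˣ, σ ∈ T.act t '' X then (((Classical.choose h)⁻¹ : Rˣ) : R) else 0

/-- Membership in the twisted Steinberg algebra `A_R(G;Σ)`: locally constant,
`Rˣ`-contravariant functions with compact image of the support in `G`. -/
def MemA (f : S → R) : Prop :=
  IsLocallyConstant f ∧
  (∀ (t : Rˣ) (σ : S), f (T.act t σ) = ((t⁻¹ : Rˣ) : R) * f σ) ∧
  IsCompact (T.q '' Function.support f)

/-- A (not necessarily continuous) section of `q`. -/
noncomputable def sec : G → S := Function.surjInv T.q_surj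

/-- Convolution on `A_R(G;Σ)`, defined via the section `sec`. -/
noncomputable def conv (f g : S → R) : S → R := fun σ =>
  ∑ᶠ α : G,
    if 𝒢.rng α = 𝒢.rng (T.q σ) then
      f (T.sec α) * g (𝒮.mul (𝒮.inv (T.sec α)) σ) else 0

end DiscreteTwist

end

/-!
It suffices to show that a nonzero `f ∈ A_R(G;Σ)` with `π f = 0` leads to a contradiction.
Since the homogeneous components of `Q` are independent, some nonzero homogeneous component
`a` of `f`, of degree `γ`, also satisfies `π a = 0`. Multiplying `a` on the left by the function
of a chart of degree `γ⁻¹` through the inverse of an arrow of its support gives an element `g` of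
degree `ε` which is nonzero at a unit; by density it is nonzero at a unit `u` whose `ε`-isotropy
lies in `Iso(Σ_ε)°`. The part of the support of `g` outside `Iso(Σ_ε)°` has compact image in `G`
with no arrow from `q u` to `q u`, so a small compact open set `B ∋ q u` of units contains no
pair of its endpoints. Cutting `g` down on both sides by the function of a chart over `B` then
leaves a nonzero element supported in `Iso(Σ_ε)°` and still killed by `π`.
-/

open Filter Topology

lemma IsCompact.exists_isOpen_not_both_mem {X Y : Type*} [TopologicalSpace X]
    [TopologicalSpace Y] [T2Space Y] {r s : X → Y} (hr : Continuous r) (hs : Continuous s)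
    {M : Set X} (hM : IsCompact M) {y : Y} (hy : ∀ α ∈ M, ¬(r α = y ∧ s α = y)) :
    ∃ V : Set Y, IsOpen V ∧ y ∈ V ∧ ∀ α ∈ M, ¬(r α ∈ V ∧ s α ∈ V) := by
  have hK : IsClosed ((fun α => (r α, s α)) '' M) :=
    (hM.image (hr.prodMk hs)).isClosed
  have hyy : (y, y) ∉ (fun α => (r α, s α)) '' M := fun ⟨α, hα, h⟩ =>
    hy α hα (Prod.ext_iff.1 h)
  obtain ⟨U, hU, U', hU', hUU'⟩ := mem_nhds_prod_iff.1 (hK.isOpen_compl.mem_nhds hyy)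
  refine ⟨interior (U ∩ U'), isOpen_interior, mem_interior_iff_mem_nhds.2 (inter_mem hU hU'),
    fun α hα ⟨hrα, hsα⟩ => ?_⟩
  exact hUU' ⟨(interior_subset hrα).1, (interior_subset hsα).2⟩ ⟨α, hα, rfl⟩

lemma IsCompact.finite_image_of_isLocallyConstant {X Y : Type*} [TopologicalSpace X]
    {K : Set X} (hK : IsCompact K) {c : X → Y} (hc : IsLocallyConstant c) : (c '' K).Finite := by
  have : CompactSpace K := isCompact_iff_compactSpace.1 hK
  rw [Set.image_eq_range]
  exact (hc.comp_continuous continuous_subtype_val).range_finite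

namespace EtaleGroupoid

variable {G : Type u} [TopologicalSpace G] (𝒢 : EtaleGroupoid G)

lemma src_src (g : G) : 𝒢.src (𝒢.src g) = 𝒢.src g := by
  conv_lhs => rw [← 𝒢.inv_mul_self g]
  rw [𝒢.src_mul _ _ (𝒢.src_inv g)]

lemma rng_src (g : G) : 𝒢.rng (𝒢.src g) = 𝒢.src g := by
  conv_lhs => rw [← 𝒢.inv_mul_self g]
  rw [𝒢.rng_mul _ _ (𝒢.src_inv g), 𝒢.rng_inv]

lemma rng_rng (g : G) : 𝒢.rng (𝒢.rng g) = 𝒢.rng g := by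
  conv_lhs => rw [← 𝒢.mul_inv_self g]
  rw [𝒢.rng_mul _ _ (𝒢.rng_inv g).symm]

lemma src_mem_unitSpace (g : G) : 𝒢.src g ∈ 𝒢.unitSpace := ⟨g, rfl⟩

lemma rng_mem_unitSpace (g : G) : 𝒢.rng g ∈ 𝒢.unitSpace := ⟨𝒢.inv g, 𝒢.src_inv g⟩

variable {𝒢} in
lemma src_of_mem_unitSpace {x : G} (hx : x ∈ 𝒢.unitSpace) : 𝒢.src x = x := by
  obtain ⟨g, rfl⟩ := hx; exact 𝒢.src_src g

variable {𝒢} in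
lemma rng_of_mem_unitSpace {x : G} (hx : x ∈ 𝒢.unitSpace) : 𝒢.rng x = x := by
  obtain ⟨g, rfl⟩ := hx; exact 𝒢.rng_src g

variable {𝒢} in
lemma inv_of_mem_unitSpace {x : G} (hx : x ∈ 𝒢.unitSpace) : 𝒢.inv x = x := by
  calc 𝒢.inv x = 𝒢.mul (𝒢.inv x) (𝒢.src (𝒢.inv x)) := (𝒢.mul_src_self _).symm
    _ = 𝒢.mul (𝒢.inv x) x := by rw [𝒢.src_inv, rng_of_mem_unitSpace hx]
    _ = x := by rw [𝒢.inv_mul_self, src_of_mem_unitSpace hx]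

lemma inv_mul_cancel_left {a b : G} (h : 𝒢.src a = 𝒢.rng b) :
    𝒢.mul (𝒢.inv a) (𝒢.mul a b) = b := by
  rw [← 𝒢.mul_assoc' _ _ _ (𝒢.src_inv a) h, 𝒢.inv_mul_self, h, 𝒢.rng_mul_self]

lemma mul_inv_cancel_left {a b : G} (h : 𝒢.rng a = 𝒢.rng b) :
    𝒢.mul a (𝒢.mul (𝒢.inv a) b) = b := by
  rw [← 𝒢.mul_assoc' _ _ _ (𝒢.rng_inv a).symm (by rw [𝒢.src_inv, h]),
    𝒢.mul_inv_self, h, 𝒢.rng_mul_self]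

lemma inv_mul_rev {a b : G} (h : 𝒢.src a = 𝒢.rng b) :
    𝒢.inv (𝒢.mul a b) = 𝒢.mul (𝒢.inv b) (𝒢.inv a) := by
  have hinv : 𝒢.src (𝒢.inv b) = 𝒢.rng (𝒢.inv a) := by rw [𝒢.src_inv, 𝒢.rng_inv, h]
  have hright : 𝒢.mul (𝒢.mul a b) (𝒢.mul (𝒢.inv b) (𝒢.inv a)) = 𝒢.rng (𝒢.mul a b) := by
    rw [𝒢.mul_assoc' _ _ _ h (by rw [𝒢.rng_mul _ _ hinv, 𝒢.rng_inv]),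
      𝒢.mul_inv_cancel_left (by rw [𝒢.rng_inv, h]), 𝒢.mul_inv_self, 𝒢.rng_mul _ _ h]
  calc 𝒢.inv (𝒢.mul a b)
      = 𝒢.mul (𝒢.inv (𝒢.mul a b)) (𝒢.rng (𝒢.mul a b)) := by
        rw [← 𝒢.src_inv, 𝒢.mul_src_self]
    _ = 𝒢.mul (𝒢.inv b) (𝒢.inv a) := by
        rw [← hright, 𝒢.inv_mul_cancel_left (by
          rw [𝒢.src_mul _ _ h, 𝒢.rng_mul _ _ hinv, 𝒢.rng_inv])]

lemma eq_of_inv_mul_mem_unitSpace {a b : G} (h : 𝒢.rng a = 𝒢.rng b)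
    (hu : 𝒢.mul (𝒢.inv a) b ∈ 𝒢.unitSpace) : a = b := by
  have hcomp : 𝒢.src (𝒢.inv a) = 𝒢.rng b := by rw [𝒢.src_inv, h]
  have hrng : 𝒢.rng (𝒢.mul (𝒢.inv a) b) = 𝒢.src a := by rw [𝒢.rng_mul _ _ hcomp, 𝒢.rng_inv]
  rw [← 𝒢.mul_inv_cancel_left h, ← rng_of_mem_unitSpace hu, hrng, 𝒢.mul_src_self]

lemma continuous_src : Continuous 𝒢.src := 𝒢.isLocalHomeomorph_src.continuous

lemma rng_eq_src_comp_inv : 𝒢.rng = 𝒢.src ∘ 𝒢.inv := funext fun g => (𝒢.src_inv g).symm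

lemma continuous_rng : Continuous 𝒢.rng := by
  rw [𝒢.rng_eq_src_comp_inv]; exact 𝒢.continuous_src.comp 𝒢.continuous_inv

lemma isOpenMap_inv : IsOpenMap 𝒢.inv := fun U hU => by
  rw [Function.Involutive.image_eq_preimage_symm 𝒢.inv_inv]
  exact hU.preimage 𝒢.continuous_inv

lemma isOpenMap_rng : IsOpenMap 𝒢.rng := by
  rw [𝒢.rng_eq_src_comp_inv]; exact 𝒢.isLocalHomeomorph_src.isOpenMap.comp 𝒢.isOpenMap_inv

lemma isOpen_unitSpace : IsOpen 𝒢.unitSpace := 𝒢.isLocalHomeomorph_src.isOpenMap.isOpen_range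

lemma continuousAt_mul {X : Type*} [TopologicalSpace X] {f g : X → G} {x : X}
    (hf : ContinuousAt f x) (hg : ContinuousAt g x)
    (hfg : ∀ᶠ y in 𝓝 x, 𝒢.src (f y) = 𝒢.rng (g y)) :
    ContinuousAt (fun y => 𝒢.mul (f y) (g y)) x :=
  (𝒢.continuousOn_mul.continuousWithinAt hfg.self_of_nhds).tendsto.comp
    (tendsto_nhdsWithin_iff.2 ⟨hf.prodMk hg, hfg⟩)

lemma continuousOn_invFunOn_rng [Nonempty G] {B : Set G} (hB : IsOpen B)
    (hinj : Set.InjOn 𝒢.rng B) : ContinuousOn (Function.invFunOn 𝒢.rng B) (𝒢.rng '' B) :=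
  (OpenPartialHomeomorph.ofContinuousOpen (hinj.toPartialEquiv _ _)
    𝒢.continuous_rng.continuousOn 𝒢.isOpenMap_rng hB).continuousOn_symm

lemma isCompact_setMul [T2Space G] {A K : Set G} (hA : IsCompact A) (hK : IsCompact K) :
    IsCompact (𝒢.setMul A K) := by
  have hD : IsCompact ((A ×ˢ K) ∩ {p : G × G | 𝒢.src p.1 = 𝒢.rng p.2}) :=
    (hA.prod hK).inter_right (isClosed_eq (𝒢.continuous_src.comp continuous_fst)
      (𝒢.continuous_rng.comp continuous_snd))
  convert hD.image_of_continuousOn (𝒢.continuousOn_mul.mono Set.inter_subset_right) using 1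
  ext g
  constructor
  · rintro ⟨a, ha, b, hb, hab, rfl⟩
    exact ⟨(a, b), ⟨⟨ha, hb⟩, hab⟩, rfl⟩
  · rintro ⟨⟨a, b⟩, ⟨⟨ha, hb⟩, hab⟩, rfl⟩
    exact ⟨a, ha, b, hb, hab, rfl⟩

variable {Γ : Type*} [Group Γ] {c : G → Γ}

lemma IsGrading.map_src (hc : 𝒢.IsGrading c) (g : G) : c (𝒢.src g) = 1 := by
  have h := hc.2 g (𝒢.src g) (𝒢.rng_src g).symm
  rwa [𝒢.mul_src_self, left_eq_mul] at h

lemma IsGrading.map_inv (hc : 𝒢.IsGrading c) (g : G) : c (𝒢.inv g) = (c g)⁻¹ := by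
  have h := hc.2 (𝒢.inv g) g (𝒢.src_inv g)
  rw [𝒢.inv_mul_self, hc.map_src] at h
  exact eq_inv_of_mul_eq_one_left h.symm

end EtaleGroupoid

namespace DiscreteTwist

variable {R : Type w} [CommRing R] {G : Type u} {S : Type v}
  [TopologicalSpace G] [TopologicalSpace S]
  {𝒢 : AmpleGroupoid G} {𝒮 : EtaleGroupoid S} (T : DiscreteTwist R 𝒢 𝒮)

lemma q_i {x : G} (hx : x ∈ 𝒢.unitSpace) (t : Rˣ) : T.q (T.i x t) = x := by
  have h : T.i x t ∈ {σ | ∃ s : Rˣ, σ = T.i x s} := ⟨t, rfl⟩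
  rwa [← T.exact' x hx] at h

lemma i_inj {x : G} (hx : x ∈ 𝒢.unitSpace) {s t : Rˣ} (h : T.i x s = T.i x t) : s = t :=
  congrArg Prod.snd (T.i_injOn (Set.mk_mem_prod hx trivial) (Set.mk_mem_prod hx trivial) h)

lemma eq_i_q_one {σ : S} (hσ : σ ∈ 𝒮.unitSpace) : σ = T.i (T.q σ) 1 :=
  T.q_unit_bij.injOn hσ (by rw [T.unit_eq]; exact ⟨_, T.q_unit_bij.mapsTo hσ, rfl⟩)
    (T.q_i (T.q_unit_bij.mapsTo hσ) 1).symm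

lemma src_eq_i (σ : S) : 𝒮.src σ = T.i (𝒢.src (T.q σ)) 1 := by
  rw [T.eq_i_q_one (𝒮.src_mem_unitSpace σ), T.q_src]

lemma rng_eq_i (σ : S) : 𝒮.rng σ = T.i (𝒢.rng (T.q σ)) 1 := by
  rw [T.eq_i_q_one (𝒮.rng_mem_unitSpace σ), T.q_rng]

lemma src_i {x : G} (hx : x ∈ 𝒢.unitSpace) (t : Rˣ) : 𝒮.src (T.i x t) = T.i x 1 := by
  rw [T.src_eq_i, T.q_i hx, 𝒢.src_of_mem_unitSpace hx]

lemma rng_i {x : G} (hx : x ∈ 𝒢.unitSpace) (t : Rˣ) : 𝒮.rng (T.i x t) = T.i x 1 := by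
  rw [T.rng_eq_i, T.q_i hx, 𝒢.rng_of_mem_unitSpace hx]

lemma inv_i {x : G} (hx : x ∈ 𝒢.unitSpace) (t : Rˣ) : 𝒮.inv (T.i x t) = T.i x t⁻¹ := by
  obtain ⟨s, hs⟩ : 𝒮.inv (T.i x t) ∈ {σ | ∃ s : Rˣ, σ = T.i x s} := by
    rw [← T.exact' x hx, Set.mem_preimage, T.q_inv, T.q_i hx, 𝒢.inv_of_mem_unitSpace hx]
    rfl
  have hts : T.i x (t * s) = T.i x 1 := by
    rw [← T.i_mul x hx, ← hs, 𝒮.mul_inv_self, T.rng_i hx]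
  rw [hs, eq_inv_of_mul_eq_one_right (T.i_inj hx hts)]

lemma src_i_rng_q (σ : S) (t : Rˣ) : 𝒮.src (T.i (𝒢.rng (T.q σ)) t) = 𝒮.rng σ := by
  rw [T.src_i (𝒢.rng_mem_unitSpace _), T.rng_eq_i]

lemma q_act (t : Rˣ) (σ : S) : T.q (T.act t σ) = T.q σ := by
  rw [act, T.q_mul _ _ (T.src_i_rng_q σ t), T.q_i (𝒢.rng_mem_unitSpace _), 𝒢.rng_mul_self]

lemma src_act (t : Rˣ) (σ : S) : 𝒮.src (T.act t σ) = 𝒮.src σ :=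
  𝒮.src_mul _ _ (T.src_i_rng_q σ t)

lemma rng_act (t : Rˣ) (σ : S) : 𝒮.rng (T.act t σ) = 𝒮.rng σ := by
  rw [T.rng_eq_i, T.q_act, ← T.rng_eq_i]

lemma act_one (σ : S) : T.act 1 σ = σ := by
  rw [act, ← T.rng_eq_i, 𝒮.rng_mul_self]

lemma act_act (s t : Rˣ) (σ : S) : T.act s (T.act t σ) = T.act (s * t) σ := by
  have hr : 𝒢.rng (T.q σ) ∈ 𝒢.unitSpace := 𝒢.rng_mem_unitSpace _
  rw [act, T.q_act, act, ← 𝒮.mul_assoc' _ _ _ (by rw [T.src_i hr, T.rng_i hr])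
    (T.src_i_rng_q σ t), T.i_mul _ hr, act]

lemma act_inv_act (t : Rˣ) (σ : S) : T.act t⁻¹ (T.act t σ) = σ := by
  rw [T.act_act, inv_mul_cancel, T.act_one]

lemma act_act_inv (t : Rˣ) (σ : S) : T.act t (T.act t⁻¹ σ) = σ := by
  simpa using T.act_inv_act t⁻¹ σ

lemma mul_act {τ σ : S} (s : Rˣ) (h : 𝒢.src (T.q τ) = 𝒢.rng (T.q σ)) :
    𝒮.mul τ (T.act s σ) = T.act s (𝒮.mul τ σ) := by
  have hr : 𝒢.rng (T.q σ) ∈ 𝒢.unitSpace := 𝒢.rng_mem_unitSpace _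
  have hτσ : 𝒮.src τ = 𝒮.rng σ := by rw [T.src_eq_i, h, ← T.rng_eq_i]
  have hcentral : 𝒮.mul τ (T.i (𝒢.rng (T.q σ)) s) = 𝒮.mul (T.i (𝒢.rng (T.q τ)) s) τ := by
    rw [T.central τ s, h]
  rw [act, ← 𝒮.mul_assoc' _ _ _ (by rw [T.rng_i hr, T.src_eq_i, h]) (T.src_i_rng_q σ s),
    hcentral, 𝒮.mul_assoc' _ _ _ (T.src_i_rng_q τ s) hτσ, act, T.q_mul _ _ hτσ,
    𝒢.rng_mul _ _ h]

lemma inv_act (t : Rˣ) (σ : S) : 𝒮.inv (T.act t σ) = T.act t⁻¹ (𝒮.inv σ) := by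
  have hcentral := T.central (𝒮.inv σ) t⁻¹
  rw [T.q_inv, 𝒢.src_inv] at hcentral
  rw [act, 𝒮.inv_mul_rev (T.src_i_rng_q σ t), T.inv_i (𝒢.rng_mem_unitSpace _), ← hcentral,
    act, T.q_inv]

lemma continuous_act (t : Rˣ) : Continuous (T.act t) := by
  have hi : Continuous fun σ => T.i (𝒢.rng (T.q σ)) t :=
    (T.continuousOn_i t).comp_continuous (𝒢.continuous_rng.comp T.continuous_q)
      fun σ => 𝒢.rng_mem_unitSpace _
  exact continuous_iff_continuousAt.2 fun σ => 𝒮.continuousAt_mul hi.continuousAt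
    continuousAt_id (Filter.Eventually.of_forall fun σ => T.src_i_rng_q σ t)

def actHomeomorph (t : Rˣ) : S ≃ₜ S where
  toFun := T.act t
  invFun := T.act t⁻¹
  left_inv := T.act_inv_act t
  right_inv := T.act_act_inv t
  continuous_toFun := T.continuous_act t
  continuous_invFun := T.continuous_act t⁻¹

def IsActInvariant (A : Set S) : Prop := ∀ (t : Rˣ) σ, σ ∈ A → T.act t σ ∈ A

lemma isActInvariant_interior {A : Set S} (hA : T.IsActInvariant A) :
    T.IsActInvariant (interior A) := fun t σ hσ => by
  have hsub : T.act t '' interior A ⊆ interior A :=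
    ((T.actHomeomorph t).image_interior A).trans_subset
      (interior_mono (Set.image_subset_iff.2 fun τ hτ => hA t τ hτ))
  exact hsub ⟨σ, hσ, rfl⟩

/-- A local trivialisation of the twist (as in `loc_triv`) over a compact open bisection. -/
structure Chart where
  B : Set G
  P : G → S
  isOpen_B : IsOpen B
  isCompact_B : IsCompact B
  isBisection_B : 𝒢.IsBisection B
  continuousOn_P : ContinuousOn P B
  q_P : ∀ β ∈ B, T.q (P β) = β
  exists_act : ∀ σ, T.q σ ∈ B → ∃ β ∈ B, ∃ t : Rˣ, T.act t (P β) = σ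
  act_injective : ∀ β ∈ B, Function.Injective fun t : Rˣ => T.act t (P β)
  isOpen_image_act : ∀ t : Rˣ, IsOpen ((fun β => T.act t (P β)) '' B)

lemma exists_chart (α : G) {O : Set G} (hO : IsOpen O) (hα : α ∈ O) :
    ∃ C : T.Chart, α ∈ C.B ∧ C.B ⊆ O := by
  obtain ⟨B₀, hB₀, hαB₀, -, P, hP, hqP, -, huniq, hopen⟩ := T.loc_triv α
  obtain ⟨B, ⟨hBc, hBo, hBb⟩, hαB, hBsub⟩ :=
    𝒢.ample.exists_subset_of_mem_open (Set.mem_inter hαB₀ hα) (hB₀.inter hO)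
  have hBB₀ : B ⊆ B₀ := fun β hβ => (hBsub hβ).1
  have hact : ∀ t : Rˣ, ∀ β ∈ B, 𝒮.mul (T.i (𝒢.rng β) t) (P β) = T.act t (P β) :=
    fun t β hβ => by rw [act, hqP β (hBB₀ hβ)]
  refine ⟨⟨B, P, hBo, hBc, hBb, hP.mono hBB₀, fun β hβ => hqP β (hBB₀ hβ), ?_, ?_, ?_⟩,
    hαB, fun β hβ => (hBsub hβ).2⟩
  · intro σ hσ
    obtain ⟨⟨β, t⟩, ⟨hβ, rfl⟩, -⟩ := huniq σ (hBB₀ hσ)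
    have hβσ : T.q (𝒮.mul (T.i (𝒢.rng β) t) (P β)) = β := by
      rw [T.q_mul _ _ (by rw [T.src_i (𝒢.rng_mem_unitSpace β), T.rng_eq_i, hqP β hβ]),
        T.q_i (𝒢.rng_mem_unitSpace β), hqP β hβ, 𝒢.rng_mul_self]
    exact ⟨β, hβσ ▸ hσ, t, by rw [act, hqP β hβ]⟩
  · intro β hβ s t hst
    obtain ⟨p, -, hp⟩ := huniq (T.act t (P β)) (by rw [T.q_act, hqP β (hBB₀ hβ)]; exact hBB₀ hβ)
    have hs := hp (β, s) ⟨hBB₀ hβ, (hact s β hβ).trans hst⟩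
    have ht := hp (β, t) ⟨hBB₀ hβ, hact t β hβ⟩
    exact congrArg Prod.snd (hs.trans ht.symm)
  · intro t
    rw [← Set.image_congr (hact t)]
    exact hopen t B hBB₀ hBo

lemma exists_act_of_q_eq {σ σ' : S} (h : T.q σ = T.q σ') : ∃ t : Rˣ, σ = T.act t σ' := by
  obtain ⟨C, hC, -⟩ := T.exists_chart (T.q σ) isOpen_univ trivial
  obtain ⟨β, hβ, t, rfl⟩ := C.exists_act σ hC
  obtain ⟨β', hβ', s, rfl⟩ := C.exists_act σ' (h ▸ hC)
  obtain rfl : β = β' := by simpa only [T.q_act, C.q_P _ hβ, C.q_P _ hβ'] using h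
  exact ⟨t * s⁻¹, by rw [T.act_act, inv_mul_cancel_right]⟩

lemma isClosed_q_image {A : Set S} (hA : T.IsActInvariant A) (hcl : IsClosed A) :
    IsClosed (T.q '' A) := by
  refine isOpen_compl_iff.1 (isOpen_iff_forall_mem_open.2 fun α hα => ?_)
  obtain ⟨C, hC, -⟩ := T.exists_chart α isOpen_univ trivial
  refine ⟨C.B ∩ C.P ⁻¹' Aᶜ, ?_, C.continuousOn_P.isOpen_inter_preimage C.isOpen_B
    hcl.isOpen_compl, ⟨hC, fun hPA => hα ⟨C.P α, hPA, C.q_P α hC⟩⟩⟩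
  rintro _ ⟨hβ, hβA⟩ ⟨σ, hσA, rfl⟩
  obtain ⟨β, hβ', t, rfl⟩ := C.exists_act σ hβ
  have h := hA t⁻¹ _ hσA
  rw [T.act_inv_act] at h
  rw [T.q_act, C.q_P β hβ'] at hβA
  exact hβA h

def IsContravariant (f : S → R) : Prop :=
  ∀ (t : Rˣ) (σ : S), f (T.act t σ) = ((t⁻¹ : Rˣ) : R) * f σ

variable {T}

lemma IsContravariant.isActInvariant_support {f : S → R} (hf : T.IsContravariant f) :
    T.IsActInvariant (Function.support f) := fun t σ hσ => by
  simpa only [Function.mem_support, hf t σ, ne_eq, Units.mul_right_eq_zero] using hσ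

lemma memA_of_isCompact {f : S → R} (hlc : IsLocallyConstant f) (hf : T.IsContravariant f)
    {K : Set G} (hK : IsCompact K) (hsub : T.q '' Function.support f ⊆ K) : T.MemA f :=
  ⟨hlc, hf, hK.of_isClosed_subset (T.isClosed_q_image hf.isActInvariant_support
    (hlc.isClopen_fiber 0).isOpen.isClosed_compl) hsub⟩

lemma memA_add {f g : S → R} (hf : T.MemA f) (hg : T.MemA g) : T.MemA (f + g) :=
  memA_of_isCompact (hf.1.add hg.1) (fun t σ => by simp [hf.2.1 t σ, hg.2.1 t σ, mul_add])
    (hf.2.2.union hg.2.2) (by rw [← Set.image_union]; exact Set.image_mono (support_add f g))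

variable (T) in
/-- The additive group of `A_R(G;Σ)`. -/
def twistedSteinberg : AddSubgroup (S → R) where
  carrier := {f | T.MemA f}
  zero_mem' := ⟨IsLocallyConstant.const 0, fun t σ => by simp, by simp⟩
  add_mem' := memA_add
  neg_mem' {f} hf := ⟨hf.1.neg, fun t σ => by simp [hf.2.1 t σ], by simpa using hf.2.2⟩

variable (T)

noncomputable def chi (C : T.Chart) : S → R := T.tilde (C.P '' C.B)

variable {T}

lemma chi_act {C : T.Chart} {β : G} (hβ : β ∈ C.B) (t : Rˣ) :
    T.chi C (T.act t (C.P β)) = ((t⁻¹ : Rˣ) : R) := by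
  have h : ∃ s : Rˣ, T.act t (C.P β) ∈ T.act s '' (C.P '' C.B) := ⟨t, _, ⟨β, hβ, rfl⟩, rfl⟩
  obtain ⟨_, ⟨β', hβ', rfl⟩, hs⟩ := Classical.choose_spec h
  have hββ' : β' = β := by
    simpa only [T.q_act, C.q_P _ hβ, C.q_P _ hβ'] using congrArg T.q hs
  subst hββ'
  rw [chi, tilde, dif_pos h, C.act_injective β' hβ' hs]

lemma chi_eq_zero_of_q_notMem {C : T.Chart} {σ : S} (h : T.q σ ∉ C.B) : T.chi C σ = 0 := by
  refine dif_neg ?_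
  rintro ⟨t, _, ⟨β, hβ, rfl⟩, rfl⟩
  exact h (by rwa [T.q_act, C.q_P β hβ])

lemma q_mem_of_chi_ne_zero {C : T.Chart} {σ : S} (h : T.chi C σ ≠ 0) : T.q σ ∈ C.B :=
  not_imp_comm.1 chi_eq_zero_of_q_notMem h

lemma isUnit_chi {C : T.Chart} {σ : S} (h : T.q σ ∈ C.B) : IsUnit (T.chi C σ) := by
  obtain ⟨β, hβ, t, rfl⟩ := C.exists_act σ h
  rw [chi_act hβ]
  exact Units.isUnit _

lemma chi_P {C : T.Chart} {β : G} (hβ : β ∈ C.B) : T.chi C (C.P β) = 1 := by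
  simpa [T.act_one] using chi_act hβ 1

lemma isContravariant_chi (C : T.Chart) : T.IsContravariant (T.chi C) := by
  intro t σ
  by_cases h : T.q σ ∈ C.B
  · obtain ⟨β, hβ, s, rfl⟩ := C.exists_act σ h
    rw [T.act_act, chi_act hβ, chi_act hβ, mul_inv, Units.val_mul, mul_comm]
  · rw [chi_eq_zero_of_q_notMem h, chi_eq_zero_of_q_notMem (by rwa [T.q_act]), mul_zero]

lemma isLocallyConstant_chi [T2Space G] (C : T.Chart) : IsLocallyConstant (T.chi C) := by
  refine (IsLocallyConstant.iff_exists_open _).2 fun σ => ?_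
  by_cases h : T.q σ ∈ C.B
  · obtain ⟨β, hβ, t, rfl⟩ := C.exists_act σ h
    refine ⟨_, C.isOpen_image_act t, ⟨β, hβ, rfl⟩, ?_⟩
    rintro _ ⟨β', hβ', rfl⟩
    rw [chi_act hβ', chi_act hβ]
  · refine ⟨T.q ⁻¹' C.Bᶜ, C.isCompact_B.isClosed.isOpen_compl.preimage T.continuous_q, h, ?_⟩
    intro τ hτ
    rw [chi_eq_zero_of_q_notMem hτ, chi_eq_zero_of_q_notMem h]

lemma memA_chi [T2Space G] (C : T.Chart) : T.MemA (T.chi C) :=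
  memA_of_isCompact (isLocallyConstant_chi C) (isContravariant_chi C) C.isCompact_B
    (Set.image_subset_iff.2 fun _ => q_mem_of_chi_ne_zero)

variable (T) in
lemma q_sec (α : G) : T.q (T.sec α) = α := Function.surjInv_eq T.q_surj α

lemma src_inv_eq_rng {τ σ : S} (h : 𝒢.rng (T.q τ) = 𝒢.rng (T.q σ)) :
    𝒮.src (𝒮.inv τ) = 𝒮.rng σ := by
  rw [𝒮.src_inv, T.rng_eq_i, T.rng_eq_i, h]

lemma q_inv_mul {τ σ : S} (h : 𝒢.rng (T.q τ) = 𝒢.rng (T.q σ)) :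
    T.q (𝒮.mul (𝒮.inv τ) σ) = 𝒢.mul (𝒢.inv (T.q τ)) (T.q σ) := by
  rw [T.q_mul _ _ (src_inv_eq_rng h), T.q_inv]

lemma inv_act_mul {τ σ : S} (t : Rˣ) (h : 𝒢.rng (T.q τ) = 𝒢.rng (T.q σ)) :
    𝒮.mul (𝒮.inv (T.act t τ)) σ = T.act t⁻¹ (𝒮.mul (𝒮.inv τ) σ) := by
  rw [T.inv_act, act, 𝒮.mul_assoc' _ _ _ (T.src_i_rng_q _ _) (src_inv_eq_rng h), act,
    q_inv_mul h, 𝒢.rng_mul _ _ (by rw [𝒢.src_inv, h]), T.q_inv]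

/-- The summand of `conv f g σ` at an arrow `α` does not depend on the lift of `α` to `Σ`. -/
lemma mul_apply_inv_mul_of_q_eq {f g : S → R} (hf : T.IsContravariant f)
    (hg : T.IsContravariant g) {τ τ' σ : S} (hq : T.q τ = T.q τ')
    (h : 𝒢.rng (T.q τ') = 𝒢.rng (T.q σ)) :
    f τ * g (𝒮.mul (𝒮.inv τ) σ) = f τ' * g (𝒮.mul (𝒮.inv τ') σ) := by
  obtain ⟨t, rfl⟩ := T.exists_act_of_q_eq hq
  rw [hf, inv_act_mul t h, hg, inv_inv, mul_mul_mul_comm, ← Units.val_mul, inv_mul_cancel,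
    Units.val_one, one_mul]

lemma conv_eq_zero {f g : S → R} {σ : S}
    (h : ∀ α, 𝒢.rng α = 𝒢.rng (T.q σ) → f (T.sec α) * g (𝒮.mul (𝒮.inv (T.sec α)) σ) = 0) :
    T.conv f g σ = 0 :=
  finsum_eq_zero_of_forall_eq_zero fun α => by
    split_ifs with hα
    exacts [h α hα, rfl]

lemma conv_eq_of_unique {f g : S → R} (hf : T.IsContravariant f) (hg : T.IsContravariant g)
    {τ σ : S} (hτ : 𝒢.rng (T.q τ) = 𝒢.rng (T.q σ))
    (h : ∀ α ≠ T.q τ, 𝒢.rng α = 𝒢.rng (T.q σ) →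
      f (T.sec α) * g (𝒮.mul (𝒮.inv (T.sec α)) σ) = 0) :
    T.conv f g σ = f τ * g (𝒮.mul (𝒮.inv τ) σ) := by
  rw [conv, finsum_eq_single _ (T.q τ) fun α hα => by split_ifs with hr; exacts [h α hα hr, rfl],
    if_pos hτ]
  exact mul_apply_inv_mul_of_q_eq hf hg (T.q_sec _) hτ

section Chart

variable {C : T.Chart} {f : S → R}

lemma conv_chi_apply (hf : T.IsContravariant f) {β : G} {σ : S} (hβ : β ∈ C.B)
    (hr : 𝒢.rng β = 𝒢.rng (T.q σ)) :
    T.conv (T.chi C) f σ = f (𝒮.mul (𝒮.inv (C.P β)) σ) := by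
  have hqP := C.q_P β hβ
  rw [conv_eq_of_unique (isContravariant_chi C) hf (τ := C.P β) (by rwa [hqP]), chi_P hβ,
    one_mul]
  intro α hα hαr
  have hαB : α ∉ C.B := fun hαB =>
    hα (by rw [hqP]; exact C.isBisection_B.2 hαB hβ (hαr.trans hr.symm))
  rw [chi_eq_zero_of_q_notMem (by rwa [T.q_sec]), zero_mul]

lemma conv_chi_eq_zero {σ : S} (h : ∀ β ∈ C.B, 𝒢.rng β ≠ 𝒢.rng (T.q σ)) :
    T.conv (T.chi C) f σ = 0 :=
  conv_eq_zero fun α hα => by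
    rw [chi_eq_zero_of_q_notMem (by rw [T.q_sec]; exact fun hαB => h α hαB hα), zero_mul]

lemma conv_chi_mul_P (hf : T.IsContravariant f) {β : G} {σ : S} (hβ : β ∈ C.B)
    (hβσ : 𝒢.src β = 𝒢.rng (T.q σ)) : T.conv (T.chi C) f (𝒮.mul (C.P β) σ) = f σ := by
  have hPσ : 𝒮.src (C.P β) = 𝒮.rng σ := by rw [T.src_eq_i, C.q_P β hβ, hβσ, ← T.rng_eq_i]
  rw [conv_chi_apply hf hβ (by rw [T.q_mul _ _ hPσ, C.q_P β hβ, 𝒢.rng_mul _ _ hβσ]),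
    𝒮.inv_mul_cancel_left hPσ]

lemma isContravariant_conv_chi (hf : T.IsContravariant f) :
    T.IsContravariant (T.conv (T.chi C) f) := by
  intro t σ
  by_cases h : ∃ β ∈ C.B, 𝒢.rng β = 𝒢.rng (T.q σ)
  · obtain ⟨β, hβ, hr⟩ := h
    rw [conv_chi_apply hf hβ (by rwa [T.q_act]), conv_chi_apply hf hβ hr,
      T.mul_act t (by rw [T.q_inv, C.q_P β hβ, 𝒢.src_inv, hr]), hf]
  · push Not at h
    rw [conv_chi_eq_zero (by simpa only [T.q_act] using h), conv_chi_eq_zero h, mul_zero]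

lemma q_image_support_conv_chi_subset (hf : T.IsContravariant f) :
    T.q '' Function.support (T.conv (T.chi C) f) ⊆ 𝒢.setMul C.B (T.q '' Function.support f) := by
  rintro _ ⟨σ, hσ, rfl⟩
  obtain ⟨β, hβ, hr⟩ : ∃ β ∈ C.B, 𝒢.rng β = 𝒢.rng (T.q σ) := by
    by_contra! h
    exact hσ (conv_chi_eq_zero h)
  have hP : 𝒢.rng (T.q (C.P β)) = 𝒢.rng (T.q σ) := by rw [C.q_P β hβ, hr]
  rw [Function.mem_support, conv_chi_apply hf hβ hr] at hσ
  refine ⟨β, hβ, _, ⟨_, hσ, rfl⟩, ?_, ?_⟩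
  · rw [q_inv_mul hP, C.q_P β hβ, 𝒢.rng_mul _ _ (by rw [𝒢.src_inv, hr]), 𝒢.rng_inv]
  · rw [q_inv_mul hP, C.q_P β hβ, 𝒢.mul_inv_cancel_left hr]

lemma isLocallyConstant_conv_chi [T2Space G] (hf : IsLocallyConstant f)
    (hf' : T.IsContravariant f) : IsLocallyConstant (T.conv (T.chi C) f) := by
  refine (IsLocallyConstant.iff_eventually_eq _).2 fun σ₀ => ?_
  have : Nonempty G := ⟨T.q σ₀⟩
  have hr : Continuous fun σ => 𝒢.rng (T.q σ) := 𝒢.continuous_rng.comp T.continuous_q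
  by_cases h₀ : 𝒢.rng (T.q σ₀) ∈ 𝒢.rng '' C.B
  · -- near `σ₀`, the unique `β ∈ B` with `r β = r (q σ)` depends continuously on `σ`
    set ρ : S → G := fun σ => Function.invFunOn 𝒢.rng C.B (𝒢.rng (T.q σ))
    have hBr : 𝒢.rng '' C.B ∈ 𝓝 (𝒢.rng (T.q σ₀)) :=
      (𝒢.isOpenMap_rng _ C.isOpen_B).mem_nhds h₀
    have hΩ : ∀ᶠ σ in 𝓝 σ₀, ρ σ ∈ C.B ∧ 𝒢.rng (ρ σ) = 𝒢.rng (T.q σ) :=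
      eventually_of_mem (hr.continuousAt.preimage_mem_nhds hBr) fun σ hσ =>
        ⟨Function.invFunOn_mem hσ, Function.invFunOn_eq hσ⟩
    have hρ : ContinuousAt ρ σ₀ :=
      ((𝒢.continuousOn_invFunOn_rng C.isOpen_B C.isBisection_B.2).continuousAt hBr).comp
        (f := fun σ => 𝒢.rng (T.q σ)) hr.continuousAt
    have hP : ContinuousAt (fun σ => C.P (ρ σ)) σ₀ :=
      (C.continuousOn_P.continuousAt (C.isOpen_B.mem_nhds hΩ.self_of_nhds.1)).comp hρ
    have hm : ContinuousAt (fun σ => 𝒮.mul (𝒮.inv (C.P (ρ σ))) σ) σ₀ :=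
      𝒮.continuousAt_mul (𝒮.continuous_inv.continuousAt.comp hP) continuousAt_id
        (hΩ.mono fun σ hσ => src_inv_eq_rng (by rw [C.q_P _ hσ.1, hσ.2]))
    filter_upwards [hΩ, hm.eventually (hf.eventually_eq _)] with σ hσ hmσ
    rw [conv_chi_apply hf' hσ.1 hσ.2, conv_chi_apply hf' hΩ.self_of_nhds.1 hΩ.self_of_nhds.2]
    exact hmσ
  · have hcl : IsClosed (𝒢.rng '' C.B) := (C.isCompact_B.image 𝒢.continuous_rng).isClosed
    filter_upwards [hr.continuousAt.preimage_mem_nhds (hcl.isOpen_compl.mem_nhds h₀)] with σ hσ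
    rw [conv_chi_eq_zero fun β hβ h => hσ ⟨β, hβ, h⟩,
      conv_chi_eq_zero fun β hβ h => h₀ ⟨β, hβ, h⟩]

lemma memA_conv_chi [T2Space G] (hf : T.MemA f) : T.MemA (T.conv (T.chi C) f) :=
  memA_of_isCompact (isLocallyConstant_conv_chi hf.1 hf.2.1) (isContravariant_conv_chi hf.2.1)
    (𝒢.isCompact_setMul C.isCompact_B hf.2.2) (q_image_support_conv_chi_subset hf.2.1)

lemma conv_chi_eq_of_subset_unitSpace (hu : C.B ⊆ 𝒢.unitSpace) (hf : T.IsContravariant f) :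
    T.conv (T.chi C) f = fun σ => T.chi C (𝒮.rng σ) * f σ := by
  funext σ
  rw [conv_eq_of_unique (isContravariant_chi C) hf (τ := 𝒮.rng σ) (by rw [T.q_rng, 𝒢.rng_rng]),
    𝒮.inv_of_mem_unitSpace (𝒮.rng_mem_unitSpace σ), 𝒮.rng_mul_self]
  intro α hα hαr
  have hαB : α ∉ C.B := fun hαB => hα (by rw [T.q_rng, ← hαr, 𝒢.rng_of_mem_unitSpace (hu hαB)])
  rw [chi_eq_zero_of_q_notMem (by rwa [T.q_sec]), zero_mul]

lemma conv_chi_right_eq_of_subset_unitSpace (hu : C.B ⊆ 𝒢.unitSpace)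
    (hf : T.IsContravariant f) : T.conv f (T.chi C) = fun σ => f σ * T.chi C (𝒮.src σ) := by
  funext σ
  rw [conv_eq_of_unique hf (isContravariant_chi C) (τ := σ) rfl, 𝒮.inv_mul_self]
  intro α hα hαr
  have hB : 𝒢.mul (𝒢.inv α) (T.q σ) ∉ C.B := fun hB =>
    hα (𝒢.eq_of_inv_mul_mem_unitSpace hαr (hu hB))
  rw [chi_eq_zero_of_q_notMem (by rwa [q_inv_mul (by rw [T.q_sec, hαr]), T.q_sec]), mul_zero]

lemma memA_conv_chi_right [T2Space G] (hu : C.B ⊆ 𝒢.unitSpace) (hf : T.MemA f) :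
    T.MemA (T.conv f (T.chi C)) := by
  rw [conv_chi_right_eq_of_subset_unitSpace hu hf.2.1]
  refine memA_of_isCompact (hf.1.mul ((isLocallyConstant_chi C).comp_continuous
    𝒮.continuous_src)) (fun t σ => ?_) hf.2.2 (Set.image_mono fun σ hσ => left_ne_zero_of_mul hσ)
  simp only [hf.2.1 t σ, T.src_act]
  ring

end Chart

lemma ne_zero_src_of_q_mem_unitSpace {f : S → R} (hf : T.IsContravariant f) {τ : S}
    (hτ : f τ ≠ 0) (hq : T.q τ ∈ 𝒢.unitSpace) : f (𝒮.src τ) ≠ 0 := by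
  obtain ⟨t, ht⟩ := T.exists_act_of_q_eq (σ := 𝒮.src τ) (σ' := τ)
    (by rw [T.q_src, 𝒢.src_of_mem_unitSpace hq])
  rw [ht]
  exact hf.isActInvariant_support t τ hτ

section Localization

variable {Γ : Type*} [Group Γ] {cG : G → Γ} {cS : S → Γ}

lemma exists_chart_conv_chi_degree_one [T2Space G] (hcG : 𝒢.IsGrading cG) {a : S → R}
    (ha : T.MemA a) {γ : Γ} (hγ : T.q '' Function.support a ⊆ cG ⁻¹' {γ}) (hne : a ≠ 0) :
    ∃ C : T.Chart, T.q '' Function.support (T.conv (T.chi C) a) ⊆ cG ⁻¹' {1} ∧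
      ∃ σ ∈ 𝒮.unitSpace, T.conv (T.chi C) a σ ≠ 0 := by
  obtain ⟨σ₀, hσ₀⟩ := Function.ne_iff.1 hne
  have hσ₀γ : cG (T.q σ₀) = γ := hγ ⟨σ₀, hσ₀, rfl⟩
  obtain ⟨C, hC, hCγ⟩ := T.exists_chart (𝒢.inv (T.q σ₀)) (hcG.1.isOpen_fiber γ⁻¹)
    (show cG _ = γ⁻¹ by rw [hcG.map_inv, hσ₀γ])
  refine ⟨C, ?_, ?_⟩
  · rintro _ hα
    obtain ⟨β, hβ, δ, ⟨σ, hσ, rfl⟩, hβσ, rfl⟩ := q_image_support_conv_chi_subset ha.2.1 hα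
    have hβγ : cG β = γ⁻¹ := hCγ hβ
    rw [Set.mem_preimage, hcG.2 _ _ hβσ, hβγ, hγ ⟨σ, hσ, rfl⟩, inv_mul_cancel]
    rfl
  · have hcomp : 𝒢.src (𝒢.inv (T.q σ₀)) = 𝒢.rng (T.q σ₀) := 𝒢.src_inv _
    have hPσ₀ : 𝒮.src (C.P (𝒢.inv (T.q σ₀))) = 𝒮.rng σ₀ := by
      rw [T.src_eq_i, C.q_P _ hC, hcomp, ← T.rng_eq_i]
    refine ⟨_, 𝒮.src_mem_unitSpace _, ne_zero_src_of_q_mem_unitSpace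
      (isContravariant_conv_chi ha.2.1) (by rwa [conv_chi_mul_P ha.2.1 hC hcomp]) ?_⟩
    rw [T.q_mul _ _ hPσ₀, C.q_P _ hC, 𝒢.inv_mul_self]
    exact 𝒢.src_mem_unitSpace _

lemma isActInvariant_iso_inter (hcomm : ∀ σ : S, cS σ = cG (T.q σ)) :
    T.IsActInvariant (𝒮.iso ∩ cS ⁻¹' {1}) := by
  rintro t σ ⟨hiso, hσ⟩
  refine ⟨?_, ?_⟩
  · change 𝒮.rng (T.act t σ) = 𝒮.src (T.act t σ)
    rwa [T.rng_act, T.src_act]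
  · rwa [Set.mem_preimage, hcomm, T.q_act, ← hcomm]

lemma exists_chart_isolating [T2Space G] (hcomm : ∀ σ : S, cS σ = cG (T.q σ)) {g : S → R}
    (hg : T.MemA g)
    (hg₁ : T.q '' Function.support g ⊆ cG ⁻¹' {1}) {u : S} (hu : u ∈ 𝒮.unitSpace)
    (huI : 𝒮.isoAt u ∩ cS ⁻¹' {1} ⊆ interior (𝒮.iso ∩ cS ⁻¹' {1})) :
    ∃ C : T.Chart, T.q u ∈ C.B ∧ C.B ⊆ 𝒢.unitSpace ∧
      ∀ σ, g σ ≠ 0 → σ ∉ interior (𝒮.iso ∩ cS ⁻¹' {1}) →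
        ¬(𝒢.rng (T.q σ) ∈ C.B ∧ 𝒢.src (T.q σ) ∈ C.B) := by
  set W := Function.support g \ interior (𝒮.iso ∩ cS ⁻¹' {1})
  have hW : T.IsActInvariant W := fun t σ ⟨hσg, hσI⟩ =>
    ⟨IsContravariant.isActInvariant_support hg.2.1 t σ hσg, fun h => hσI (by
      simpa only [T.act_inv_act] using
        T.isActInvariant_interior (isActInvariant_iso_inter hcomm) t⁻¹ _ h)⟩
  have hM : IsCompact (T.q '' W) :=
    hg.2.2.of_isClosed_subset (T.isClosed_q_image hW ((hg.1.isClopen_fiber 0).isOpen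
      |>.isClosed_compl.inter isOpen_interior.isClosed_compl)) (Set.image_mono Set.sdiff_subset)
  have hMu : ∀ α ∈ T.q '' W, ¬(𝒢.rng α = T.q u ∧ 𝒢.src α = T.q u) := by
    rintro _ ⟨σ, ⟨hσg, hσI⟩, rfl⟩ ⟨hr, hs⟩
    refine hσI (huI ⟨⟨?_, ?_⟩, ?_⟩)
    · rw [T.rng_eq_i, hr, ← T.eq_i_q_one hu]
    · rw [T.src_eq_i, hs, ← T.eq_i_q_one hu]
    · rw [Set.mem_preimage, hcomm]
      exact hg₁ ⟨σ, hσg, rfl⟩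
  obtain ⟨V, hV, huV, hVM⟩ :=
    hM.exists_isOpen_not_both_mem 𝒢.continuous_rng 𝒢.continuous_src hMu
  obtain ⟨C, hC, hCV⟩ := T.exists_chart (T.q u) (hV.inter 𝒢.isOpen_unitSpace)
    ⟨huV, T.q_unit_bij.mapsTo hu⟩
  exact ⟨C, hC, fun β hβ => (hCV hβ).2, fun σ hσg hσI hσC =>
    hVM _ ⟨σ, ⟨hσg, hσI⟩, rfl⟩ ⟨(hCV hσC.1).1, (hCV hσC.2).1⟩⟩

theorem exists_mem_ne_zero_support_subset_interior_iso [T2Space G] (hcG : 𝒢.IsGrading cG)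
    (hcomm : ∀ σ : S, cS σ = cG (T.q σ))
    (hdense : 𝒮.unitSpace ⊆ closure {u ∈ 𝒮.unitSpace |
      𝒮.isoAt u ∩ cS ⁻¹' {1} ⊆ interior (𝒮.iso ∩ cS ⁻¹' {1})})
    {J : Set (S → R)} (hJ : ∀ f ∈ J, T.MemA f)
    (hleft : ∀ (C : T.Chart), ∀ f ∈ J, T.conv (T.chi C) f ∈ J)
    (hright : ∀ C : T.Chart, C.B ⊆ 𝒢.unitSpace → ∀ f ∈ J, T.conv f (T.chi C) ∈ J)
    {a : S → R} (ha : a ∈ J) {γ : Γ} (hγ : T.q '' Function.support a ⊆ cG ⁻¹' {γ})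
    (hne : a ≠ 0) :
    ∃ f ∈ J, f ≠ 0 ∧ Function.support f ⊆ interior (𝒮.iso ∩ cS ⁻¹' {1}) := by
  obtain ⟨C₁, hdeg, τ, hτ, hgτ⟩ := exists_chart_conv_chi_degree_one hcG (hJ a ha) hγ hne
  set g := T.conv (T.chi C₁) a
  have hgJ : g ∈ J := hleft C₁ a ha
  have hg : T.MemA g := hJ g hgJ
  obtain ⟨u, ⟨hgu, hu⟩, -, huI⟩ := mem_closure_iff.1 (hdense hτ) _
    ((hg.1.isClosed_fiber 0).isOpen_compl.inter 𝒮.isOpen_unitSpace) ⟨hgτ, hτ⟩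
  obtain ⟨C₂, huC, hC₂, hsep⟩ := exists_chart_isolating hcomm hg hdeg hu huI
  refine ⟨_, hright C₂ hC₂ _ (hleft C₂ g hgJ), ?_⟩
  rw [conv_chi_right_eq_of_subset_unitSpace hC₂ (isContravariant_conv_chi hg.2.1),
    conv_chi_eq_of_subset_unitSpace hC₂ hg.2.1]
  have hchi_u : IsUnit (T.chi C₂ u) := isUnit_chi huC
  refine ⟨Function.ne_iff.2 ⟨u, ?_⟩, fun σ hσ => ?_⟩
  · dsimp only
    rw [𝒮.rng_of_mem_unitSpace hu, 𝒮.src_of_mem_unitSpace hu, Pi.zero_apply, ne_eq,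
      hchi_u.mul_left_eq_zero, hchi_u.mul_right_eq_zero]
    exact hgu
  · rw [Function.mem_support] at hσ
    dsimp only at hσ
    have hrng := q_mem_of_chi_ne_zero (left_ne_zero_of_mul (left_ne_zero_of_mul hσ))
    have hsrc := q_mem_of_chi_ne_zero (right_ne_zero_of_mul hσ)
    rw [T.q_rng] at hrng
    rw [T.q_src] at hsrc
    by_contra hσI
    exact hsep σ (right_ne_zero_of_mul (left_ne_zero_of_mul hσ)) hσI ⟨hrng, hsrc⟩

end Localization

section GradedPart

variable (T) {Γ : Type*} (cG : G → Γ)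

noncomputable def gradedPart (γ : Γ) (f : S → R) : S → R :=
  fun σ => if cG (T.q σ) = γ then f σ else 0

variable {T cG}

lemma memA_gradedPart (hc : IsLocallyConstant cG) {f : S → R} (hf : T.MemA f) (γ : Γ) :
    T.MemA (T.gradedPart cG γ f) := by
  have hlc : IsLocallyConstant (T.gradedPart cG γ f) :=
    (hc.comp_continuous T.continuous_q).comp₂ hf.1 fun δ r => if δ = γ then r else 0
  refine memA_of_isCompact hlc (fun t σ => ?_) hf.2.2 (Set.image_mono fun σ hσ => ?_)
  · simp only [gradedPart, T.q_act, hf.2.1 t σ]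
    split_ifs <;> simp
  · exact fun h => hσ (by simp [gradedPart, h])

lemma q_image_support_gradedPart (f : S → R) (γ : Γ) :
    T.q '' Function.support (T.gradedPart cG γ f) ⊆ cG ⁻¹' {γ} := by
  rintro _ ⟨σ, hσ, rfl⟩
  by_contra h
  exact hσ (if_neg h)

lemma sum_gradedPart {f : S → R} {F : Finset Γ}
    (hF : ∀ σ, f σ ≠ 0 → cG (T.q σ) ∈ F) : ∑ γ ∈ F, T.gradedPart cG γ f = f := by
  funext σ
  rw [Finset.sum_apply]
  simp only [gradedPart, Finset.sum_ite_eq]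
  split_ifs with h
  · rfl
  · exact (not_imp_comm.1 (hF σ) h).symm

lemma exists_gradedPart_ne_zero {f : S → R} (hf : f ≠ 0) : ∃ γ, T.gradedPart cG γ f ≠ 0 := by
  obtain ⟨σ, hσ⟩ := Function.ne_iff.1 hf
  exact ⟨cG (T.q σ), Function.ne_iff.2 ⟨σ, by simpa [gradedPart] using hσ⟩⟩

lemma map_gradedPart_eq_zero {Q : Type*} [AddCommGroup Q] (gr : Γ → AddSubgroup Q)
    (hindep : ∀ (F : Finset Γ) (x : Γ → Q), (∀ γ ∈ F, x γ ∈ gr γ) →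
      (∑ γ ∈ F, x γ) = 0 → ∀ γ ∈ F, x γ = 0)
    (π : T.twistedSteinberg →+ Q)
    (hπ : ∀ (γ : Γ) (f : T.twistedSteinberg),
      T.q '' Function.support (f : S → R) ⊆ cG ⁻¹' {γ} → π f ∈ gr γ)
    (hc : IsLocallyConstant cG) {f : T.twistedSteinberg} (hf : π f = 0) (γ : Γ) :
    π ⟨T.gradedPart cG γ f, memA_gradedPart hc f.2 γ⟩ = 0 := by
  set x : Γ → T.twistedSteinberg := fun δ => ⟨T.gradedPart cG δ f, memA_gradedPart hc f.2 δ⟩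
  set F := (f.2.2.2.finite_image_of_isLocallyConstant hc).toFinset
  have hF : ∀ σ, (f : S → R) σ ≠ 0 → cG (T.q σ) ∈ F := fun σ hσ =>
    (Set.Finite.mem_toFinset _).2 ⟨T.q σ, ⟨σ, hσ, rfl⟩, rfl⟩
  by_cases hγ : γ ∈ F
  · refine hindep F (fun δ => π (x δ)) (fun δ _ => hπ δ _ (q_image_support_gradedPart _ δ)) ?_ γ hγ
    rw [← map_sum, ← hf]
    exact congrArg π (Subtype.ext (by rw [AddSubgroup.val_finsetSum]; exact sum_gradedPart hF))
  · have hx : x γ = 0 := Subtype.ext <| funext fun σ => by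
      by_cases hσ : (f : S → R) σ = 0
      · simp [x, gradedPart, hσ]
      · exact if_neg fun h : cG (T.q σ) = γ => hγ (h ▸ hF σ hσ)
    exact (congrArg π hx).trans (map_zero π)

end GradedPart

end DiscreteTwist

theorem stmt_14_general {R : Type*} [CommRing R] {G S : Type*}
    [TopologicalSpace G] [TopologicalSpace S] [T2Space G]
    {𝒢 : AmpleGroupoid G} {𝒮 : EtaleGroupoid S} (T : DiscreteTwist R 𝒢 𝒮)
    {Γ : Type*} [Group Γ]
    (cG : G → Γ) (cS : S → Γ)
    (hcG : 𝒢.IsGrading cG)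
    (hcomm : ∀ σ : S, cS σ = cG (T.q σ))
    (hdense : 𝒮.unitSpace ⊆ closure {u ∈ 𝒮.unitSpace |
      𝒮.isoAt u ∩ cS ⁻¹' {1} ⊆ interior (𝒮.iso ∩ cS ⁻¹' {1})})
    {Q : Type*} [Ring Q] (gr : Γ → AddSubgroup Q)
    (hindep : ∀ (F : Finset Γ) (x : Γ → Q), (∀ γ ∈ F, x γ ∈ gr γ) →
      (∑ γ ∈ F, x γ) = 0 → ∀ γ ∈ F, x γ = 0)
    (π : (S → R) → Q)
    (hzero : π 0 = 0)
    (hadd : ∀ f g, T.MemA f → T.MemA g → π (f + g) = π f + π g)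
    (hmul : ∀ f g, T.MemA f → T.MemA g → π (T.conv f g) = π f * π g)
    (hgraded : ∀ (γ : Γ) (f : S → R), T.MemA f →
      T.q '' Function.support f ⊆ cG ⁻¹' {γ} → π f ∈ gr γ) :
    Set.InjOn π {f | T.MemA f} ↔
      ∀ f : S → R, T.MemA f →
        Function.support f ⊆ interior (𝒮.iso ∩ cS ⁻¹' {1}) →
        f ≠ 0 → π f ≠ 0 := by
  refine ⟨fun hinj f hf _ hne hπ => hne (hinj hf T.twistedSteinberg.zero_mem (by rw [hπ, hzero])),
    fun hker => ?_⟩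
  let π' : T.twistedSteinberg →+ Q :=
    { toFun := fun f => π f, map_zero' := hzero, map_add' := fun f g => hadd f g f.2 g.2 }
  suffices Function.Injective π' from
    fun f hf g hg hfg => congrArg Subtype.val (this (a₁ := ⟨f, hf⟩) (a₂ := ⟨g, hg⟩) hfg)
  refine (injective_iff_map_eq_zero π').2 fun f hf => Subtype.ext ?_
  by_contra hne
  obtain ⟨γ, hγ⟩ := DiscreteTwist.exists_gradedPart_ne_zero (T := T) (cG := cG) hne
  obtain ⟨h, ⟨hA, hπh⟩, hh, hsupp⟩ :=
    DiscreteTwist.exists_mem_ne_zero_support_subset_interior_iso hcG hcomm hdense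
      (J := {f | T.MemA f ∧ π f = 0}) (fun f hf => hf.1)
      (fun C f hf => ⟨DiscreteTwist.memA_conv_chi hf.1,
        by rw [hmul _ _ (DiscreteTwist.memA_chi C) hf.1, hf.2, mul_zero]⟩)
      (fun C hC f hf => ⟨DiscreteTwist.memA_conv_chi_right hC hf.1,
        by rw [hmul _ _ hf.1 (DiscreteTwist.memA_chi C), hf.2, zero_mul]⟩)
      ⟨DiscreteTwist.memA_gradedPart hcG.1 f.2 γ,
        DiscreteTwist.map_gradedPart_eq_zero gr hindep π'
          (fun γ f hf => hgraded γ f f.2 hf) hcG.1 hf γ⟩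
      (DiscreteTwist.q_image_support_gradedPart _ γ) hγ
  exact hker h hA hsupp hh hπh

/-- Generalised Graded Uniqueness Theorem: for a `Γ`-graded
discrete `R`-twist with `{u ∈ Σ_ε⁽⁰⁾ : (Σ_ε)ᵤᵘ ⊆ Iso(Σ_ε)°}` dense in `Σ⁽⁰⁾`,
a graded ring homomorphism `π : A_R(G;Σ) → Q` into a `Γ`-graded ring `Q` is
injective iff it is nonzero on every nonzero element of
`A_R(Iso(G_ε)°; Iso(Σ_ε)°)`, i.e. every nonzero `f ∈ A_R(G;Σ)` supported in
`Iso(Σ_ε)°`. -/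
theorem stmt_14 {R : Type*} [CommRing R] {G S : Type*}
    [TopologicalSpace G] [TopologicalSpace S] [T2Space G] [T2Space S]
    {𝒢 : AmpleGroupoid G} {𝒮 : EtaleGroupoid S} (T : DiscreteTwist R 𝒢 𝒮)
    {Γ : Type*} [Group Γ]
    (cG : G → Γ) (cS : S → Γ)
    (hcG : 𝒢.IsGrading cG) (hcS : 𝒮.IsGrading cS)
    (hcomm : ∀ σ : S, cS σ = cG (T.q σ))
    (hdense : 𝒮.unitSpace ⊆ closure {u ∈ 𝒮.unitSpace |
      𝒮.isoAt u ∩ cS ⁻¹' {1} ⊆ interior (𝒮.iso ∩ cS ⁻¹' {1})})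
    {Q : Type*} [Ring Q] (gr : Γ → AddSubgroup Q)
    (hgrmul : ∀ γ δ : Γ, ∀ x ∈ gr γ, ∀ y ∈ gr δ, x * y ∈ gr (γ * δ))
    (hindep : ∀ (F : Finset Γ) (x : Γ → Q), (∀ γ ∈ F, x γ ∈ gr γ) →
      (∑ γ ∈ F, x γ) = 0 → ∀ γ ∈ F, x γ = 0)
    (π : (S → R) → Q)
    (hzero : π 0 = 0)
    (hadd : ∀ f g, T.MemA f → T.MemA g → π (f + g) = π f + π g)
    (hmul : ∀ f g, T.MemA f → T.MemA g → π (T.conv f g) = π f * π g)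
    (hgraded : ∀ (γ : Γ) (f : S → R), T.MemA f →
      T.q '' Function.support f ⊆ cG ⁻¹' {γ} → π f ∈ gr γ) :
    Set.InjOn π {f | T.MemA f} ↔
      ∀ f : S → R, T.MemA f →
        Function.support f ⊆ interior (𝒮.iso ∩ cS ⁻¹' {1}) →
        f ≠ 0 → π f ≠ 0 :=
  stmt_14_general T cG cS hcG hcomm hdense gr hindep π hzero hadd hmul hgraded
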